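/- arXiv:0911.5117 — 5 statements merged into one kernel-verified Lean document; each statement's English description precedes it below -/
import Mathlib

section
/- Let I ⊆ ℝ be an interval, K > 0, u : I × ℝ → ℝ continuous, and c : I → ℝ a function such that for every t ∈ I and x ≥ 0: u(t,x) = (K - x)⁺ if and only if x ≤ c(t), and u(t,x) > (K - x)⁺ for x > c(t). Then c is upper semicontinuous on I. -/
theorem stmt_7 (I : Set ℝ) (hI : I.OrdConnected) (K : ℝ) (hK : 0 < K)
    (u : ℝ → ℝ → ℝ) (hu : ContinuousOn (fun p : ℝ × ℝ => u p.1 p.2) (I ×ˢ Set.univ))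
    (c : ℝ → ℝ) (hc0 : ∀ t ∈ I, 0 ≤ c t) (hcK : ∀ t ∈ I, c t ≤ K)
    (hset : ∀ t ∈ I, {x ∈ Set.Ici (0:ℝ) | u t x = max (K - x) 0} = Set.Icc 0 (c t)) :
    ∀ t₀ ∈ I, Filter.limsup c (nhdsWithin t₀ I) ≤ c t₀ := by
  intro t₀ ht₀
  by_contra h
  push_neg at h
  set F := nhdsWithin t₀ I with hF
  rcases F.eq_or_neBot with hbot | hne
  · rw [hbot] at h
    simp only [Filter.limsup_eq, Filter.eventually_bot, Set.setOf_true] at h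
    rw [Real.sInf_of_not_bddBelow not_bddBelow_univ] at h
    exact absurd h (not_lt.mpr (hc0 t₀ ht₀))
  · have hFI : ∀ᶠ t in F, t ∈ I := eventually_mem_nhdsWithin
    have hcb : Filter.IsCoboundedUnder (· ≤ ·) F c :=
      Filter.isCoboundedUnder_le_of_eventually_le F (x := 0)
        (hFI.mono fun t ht => hc0 t ht)
    obtain ⟨x, hx0, hxL⟩ := exists_between h
    have hfreq : ∃ᶠ t in F, x < c t := Filter.frequently_lt_of_lt_limsup hcb hxL
    have hfreq2 : ∃ᶠ t in F, u t x = max (K - x) 0 := by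
      refine (hfreq.and_eventually hFI).mono ?_
      rintro t ⟨hlt, htI⟩
      have hx : x ∈ Set.Icc 0 (c t) :=
        ⟨le_of_lt (lt_of_le_of_lt (hc0 t₀ ht₀) hx0), hlt.le⟩
      rw [← hset t htI] at hx
      exact hx.2
    have hcont : Filter.Tendsto (fun t => u t x) F (nhds (u t₀ x)) := by
      have h1 : ContinuousWithinAt (fun p : ℝ × ℝ => u p.1 p.2) (I ×ˢ Set.univ) (t₀, x) :=
        hu (t₀, x) ⟨ht₀, trivial⟩
      have h2 : ContinuousWithinAt (fun t : ℝ => (t, x)) I t₀ :=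
        (continuous_id.prodMk continuous_const).continuousWithinAt
      have h3 := ContinuousWithinAt.comp (f := fun t : ℝ => (t, x)) h1 h2
        fun t (ht : t ∈ I) => Set.mk_mem_prod ht trivial
      exact h3
    have heq : u t₀ x = max (K - x) 0 :=
      tendsto_nhds_unique_of_frequently_eq hcont tendsto_const_nhds hfreq2
    have hxmem : x ∈ Set.Icc 0 (c t₀) := by
      rw [← hset t₀ ht₀]
      exact ⟨le_of_lt (lt_of_le_of_lt (hc0 t₀ ht₀) hx0), heq⟩
    exact absurd hxmem.2 (not_le.mpr hx0)
end

section
/- Let g : ℝ → ℝ be convex on (0,∞) and let g'₋ denote its left derivative. Then the function x ↦ x·g'₋(x) - g(x) is nondecreasing on (0,∞). -/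
open Set

namespace ConvexOn

variable {S : Set ℝ} {f : ℝ → ℝ} {x y : ℝ}

lemma leftDeriv_le_slope_of_mem_interior (hf : ConvexOn ℝ S f) (hx : x ∈ interior S)
    (hy : y ∈ S) (hxy : x < y) :
    derivWithin f (Iio x) x ≤ slope f x y :=
  (hf.leftDeriv_le_rightDeriv_of_mem_interior hx).trans
    (hf.rightDeriv_le_slope_of_mem_interior hx hy hxy)

lemma monotoneOn_mul_leftDeriv_sub (hf : ConvexOn ℝ S f) :
    MonotoneOn (fun x ↦ x * derivWithin f (Iio x) x - f x) (interior S ∩ Ici 0) := by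
  rintro a ⟨ha, ha0⟩ b ⟨hb, hb0⟩ hab
  rcases hab.eq_or_lt with rfl | hab
  · rfl
  have hleft : derivWithin f (Iio a) a ≤ slope f a b :=
    hf.leftDeriv_le_slope_of_mem_interior ha (interior_subset hb) hab
  have hright : slope f a b ≤ derivWithin f (Iio b) b :=
    hf.slope_le_leftDeriv_of_mem_interior (interior_subset ha) hb hab
  have hsecant : (b - a) * slope f a b = f b - f a := by
    rw [slope_def_field, mul_div_cancel₀ _ (sub_ne_zero.mpr hab.ne')]
  -- with `s` the secant slope, the increment is `b (f'₋ b - s) + a (s - f'₋ a)`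
  have := mul_le_mul_of_nonneg_left hleft (show (0 : ℝ) ≤ a from ha0)
  have := mul_le_mul_of_nonneg_left hright (show (0 : ℝ) ≤ b from hb0)
  dsimp only
  linarith

end ConvexOn

theorem stmt_12 (g : ℝ → ℝ) (hconv : ConvexOn ℝ (Set.Ioi 0) g) :
    MonotoneOn (fun x => x * derivWithin g (Set.Iio x) x - g x) (Set.Ioi 0) :=
  hconv.monotoneOn_mul_leftDeriv_sub.mono fun x (hx : 0 < x) ↦
    ⟨by rwa [interior_Ioi], mem_Ici.2 hx.le⟩
end

section
/- Let 0 < x* and let g, D : ℝ → ℝ be differentiable on (0, x*) with g convex on (0,x*), D concave on (0,x*), D(x) → 0 as x → 0⁺, and g'(x) = D'(x) - 1 for all x ∈ (0, x*). Then there exists ρ ∈ ℝ such that D(x) = (1-ρ)·x for all x ∈ (0, x*), and g(x) - g(y) = -ρ(x - y) for all x, y ∈ (0, x*) (g is affine with slope -ρ). -/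
/-!
By convexity `g'` is nondecreasing, and by concavity `D' - 1 = g'` is nonincreasing, so `g'` is
a constant `c` on `(0, x*)`. Hence `g` and `D` are affine there with slopes `c` and `c + 1`, and the
limit `D(0⁺) = 0` forces the intercept of `D` to vanish; take `ρ = -c`.
-/

open Set Filter Topology

theorem MonotoneOn.eq_of_antitoneOn {α β : Type*} [LinearOrder α] [PartialOrder β] {f : α → β}
    {s : Set α} (hmono : MonotoneOn f s) (hanti : AntitoneOn f s) {a : α} (ha : a ∈ s) :
    ∀ x ∈ s, f x = f a := by
  intro x hx
  rcases le_total x a with hxa | hax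
  · exact le_antisymm (hmono hx ha hxa) (hanti hx ha hxa)
  · exact le_antisymm (hanti ha hx hax) (hmono ha hx hax)

theorem IsOpen.exists_eqOn_affine_of_deriv_eq_const {𝕜 : Type*} [RCLike 𝕜] {f : 𝕜 → 𝕜}
    {s : Set 𝕜} (hs : IsOpen s) (hs' : IsPreconnected s) (hf : DifferentiableOn 𝕜 f s) {c : 𝕜}
    (hf' : ∀ x ∈ s, deriv f x = c) : ∃ a, s.EqOn f (fun x => c * x + a) :=
  hs.exists_eq_add_of_deriv_eq hs' hf (differentiableOn_id.const_mul c)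
    fun x hx => by simp [hf' x hx]

theorem eq_of_eqOn_affine_Ioo_of_tendsto_nhdsGT {f : ℝ → ℝ} {b m a L : ℝ} (hb : 0 < b)
    (hf : (Ioo 0 b).EqOn f (fun x => m * x + a)) (hlim : Tendsto f (𝓝[>] 0) (𝓝 L)) : a = L := by
  have haffine : Tendsto (fun x => m * x + a) (𝓝[>] 0) (𝓝 a) :=
    ((by fun_prop : Continuous fun x : ℝ => m * x + a).tendsto' 0 a (by simp)).mono_left
      nhdsWithin_le_nhds
  exact tendsto_nhds_unique (haffine.congr' (eventuallyEq_of_mem (Ioo_mem_nhdsGT hb) hf).symm) hlim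

theorem stmt_13 (xs : ℝ) (hxs : 0 < xs) (g D : ℝ → ℝ)
    (hgdiff : DifferentiableOn ℝ g (Set.Ioo 0 xs))
    (hDdiff : DifferentiableOn ℝ D (Set.Ioo 0 xs))
    (hgconv : ConvexOn ℝ (Set.Ioo 0 xs) g)
    (hDconc : ConcaveOn ℝ (Set.Ioo 0 xs) D)
    (hDlim : Filter.Tendsto D (nhdsWithin 0 (Set.Ioi 0)) (nhds 0))
    (hder : ∀ x ∈ Set.Ioo 0 xs, deriv g x = deriv D x - 1) :
    ∃ ρ : ℝ, (∀ x ∈ Set.Ioo 0 xs, D x = (1 - ρ) * x) ∧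
      (∀ x ∈ Set.Ioo 0 xs, ∀ y ∈ Set.Ioo 0 xs, g x - g y = -ρ * (x - y)) := by
  have hmid : xs / 2 ∈ Ioo 0 xs := ⟨by positivity, by linarith⟩
  have hmono : MonotoneOn (deriv g) (Ioo 0 xs) :=
    hgconv.monotoneOn_deriv fun x hx => hgdiff.differentiableAt (isOpen_Ioo.mem_nhds hx)
  have hanti : AntitoneOn (deriv g) (Ioo 0 xs) := fun x hx y hy hxy => by
    have := hDconc.antitoneOn_deriv
      (fun z hz => hDdiff.differentiableAt (isOpen_Ioo.mem_nhds hz)) hx hy hxy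
    rw [hder x hx, hder y hy]
    linarith
  set c := deriv g (xs / 2)
  have hg' : ∀ x ∈ Ioo 0 xs, deriv g x = c := hmono.eq_of_antitoneOn hanti hmid
  have hD' : ∀ x ∈ Ioo 0 xs, deriv D x = c + 1 := fun x hx => by linarith [hder x hx, hg' x hx]
  obtain ⟨a, ha⟩ := isOpen_Ioo.exists_eqOn_affine_of_deriv_eq_const isPreconnected_Ioo hgdiff hg'
  obtain ⟨b, hb⟩ := isOpen_Ioo.exists_eqOn_affine_of_deriv_eq_const isPreconnected_Ioo hDdiff hD'
  obtain rfl : b = 0 := eq_of_eqOn_affine_Ioo_of_tendsto_nhdsGT hxs hb hDlim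
  refine ⟨-c, fun x hx => by rw [hb hx]; ring, fun x hx y hy => by rw [ha hx, ha hy]; ring⟩
end

section
/- Let φ : ℝ → ℝ be differentiable on (0,∞) with φ'(y) < 0 for all y > 0, let D : ℝ → ℝ be concave on (0,∞) with 0 < x - D(x) for x > 0, and suppose g(x) := φ(x - D(x)) is convex on (0,∞). Then D has equal one-sided derivatives at every x > 0, i.e., D is differentiable on (0,∞), and consequently g is differentiable on (0,∞) with g'(x) = φ'(x - D(x))·(1 - D'(x)). -/
open Set

/-- A convex function on `Ioi 0` has one-sided derivatives at every point of `Ioi 0`,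
with left derivative ≤ right derivative. -/
lemma convex_onesided {f : ℝ → ℝ} (hf : ConvexOn ℝ (Set.Ioi 0) f) {x : ℝ} (hx : 0 < x) :
    ∃ a b : ℝ, HasDerivWithinAt f a (Set.Iio x) x ∧ HasDerivWithinAt f b (Set.Ioi x) x ∧
      a ≤ b := by
  have hx2 : (0:ℝ) < x / 2 := by linarith
  have hx2x : x / 2 < x := by linarith
  have hmono : MonotoneOn (slope f x) (Set.Ioi 0 \ {x}) := hf.slope_mono hx
  have hmemL : ∀ y ∈ Ioo (x/2) x, y ∈ Set.Ioi 0 \ {x} :=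
    fun y hy => ⟨lt_trans hx2 hy.1, ne_of_lt hy.2⟩
  have hmemR : ∀ y ∈ Ioo x (x+1), y ∈ Set.Ioi 0 \ {x} :=
    fun y hy => ⟨lt_trans hx hy.1, ne_of_gt hy.1⟩
  have hx1 : (x+1) ∈ Set.Ioi 0 \ {x} :=
    ⟨Set.mem_Ioi.mpr (by linarith), by simp only [Set.mem_singleton_iff]; intro h; linarith⟩
  have hx2m : (x/2) ∈ Set.Ioi 0 \ {x} := ⟨hx2, ne_of_lt hx2x⟩
  -- left limit
  have hneL : (Ioo (x/2) x).Nonempty := ⟨(x/2 + x)/2, Set.mem_Ioo.mpr ⟨by linarith, by linarith⟩⟩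
  have hmonoL : MonotoneOn (slope f x) (Ioo (x/2) x) :=
    hmono.mono (fun y hy => hmemL y hy)
  have hbddL : BddAbove (slope f x '' Ioo (x/2) x) := by
    refine ⟨slope f x (x+1), ?_⟩
    rintro _ ⟨y, hy, rfl⟩
    exact hmono (hmemL y hy) hx1 (by linarith [hy.2])
  have hTL := MonotoneOn.tendsto_nhdsWithin_Ioo_left hneL hmonoL hbddL
  set A := sSup (slope f x '' Ioo (x/2) x) with hA
  have hL : HasDerivWithinAt f A (Set.Iio x) x := by
    rw [hasDerivWithinAt_iff_tendsto_slope]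
    have : Set.Iio x \ {x} = Set.Iio x := by
      rw [diff_singleton_eq_self]; simp
    rw [this]; exact hTL
  -- right limit
  have hneR : (Ioo x (x+1)).Nonempty := ⟨x + 1/2, Set.mem_Ioo.mpr ⟨by linarith, by linarith⟩⟩
  have hmonoR : MonotoneOn (slope f x) (Ioo x (x+1)) :=
    hmono.mono (fun y hy => hmemR y hy)
  have hbddR : BddBelow (slope f x '' Ioo x (x+1)) := by
    refine ⟨slope f x (x/2), ?_⟩
    rintro _ ⟨y, hy, rfl⟩
    exact hmono hx2m (hmemR y hy) (by linarith [hy.1])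
  have hTR := MonotoneOn.tendsto_nhdsWithin_Ioo_right hneR hmonoR hbddR
  set B := sInf (slope f x '' Ioo x (x+1)) with hB
  have hR : HasDerivWithinAt f B (Set.Ioi x) x := by
    rw [hasDerivWithinAt_iff_tendsto_slope]
    have : Set.Ioi x \ {x} = Set.Ioi x := by
      rw [diff_singleton_eq_self]; simp
    rw [this]; exact hTR
  refine ⟨A, B, hL, hR, ?_⟩
  apply csSup_le (hneL.image _)
  rintro _ ⟨y, hy, rfl⟩
  apply le_csInf (hneR.image _)
  rintro _ ⟨z, hz, rfl⟩
  exact hmono (hmemL y hy) (hmemR z hz) (by linarith [hy.2, hz.1])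

/-- For a convex function on `Ioi 0`, any left derivative is ≤ any right derivative. -/
lemma convex_left_le_right {f : ℝ → ℝ} (hf : ConvexOn ℝ (Set.Ioi 0) f) {x a b : ℝ}
    (hx : 0 < x) (ha : HasDerivWithinAt f a (Set.Iio x) x)
    (hb : HasDerivWithinAt f b (Set.Ioi x) x) : a ≤ b := by
  obtain ⟨a', b', ha', hb', hab⟩ := convex_onesided hf hx
  have h1 : a = a' := by
    have e1 := ha.derivWithin (uniqueDiffWithinAt_Iio x)
    have e2 := ha'.derivWithin (uniqueDiffWithinAt_Iio x)
    rw [← e1, ← e2]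
  have h2 : b = b' := by
    have e1 := hb.derivWithin (uniqueDiffWithinAt_Ioi x)
    have e2 := hb'.derivWithin (uniqueDiffWithinAt_Ioi x)
    rw [← e1, ← e2]
  rw [h1, h2]; exact hab

theorem stmt_14 (φ D : ℝ → ℝ)
    (hφdiff : ∀ y > (0:ℝ), DifferentiableAt ℝ φ y)
    (hφ' : ∀ y > (0:ℝ), deriv φ y < 0)
    (hDconc : ConcaveOn ℝ (Set.Ioi 0) D)
    (hxD : ∀ x > (0:ℝ), 0 < x - D x)
    (g : ℝ → ℝ) (hg : ∀ x, g x = φ (x - D x))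
    (hgconv : ConvexOn ℝ (Set.Ioi 0) g) :
    ∀ x > (0:ℝ), DifferentiableAt ℝ D x ∧
      HasDerivAt g (deriv φ (x - D x) * (1 - deriv D x)) x := by
  intro x hx
  set s := x - D x with hs
  have hs0 : 0 < s := hxD x hx
  have hφs : HasDerivAt φ (deriv φ s) s := (hφdiff s hs0).hasDerivAt
  have hφ's : deriv φ s < 0 := hφ' s hs0
  -- one-sided derivatives of -D (convex)
  obtain ⟨a, b, hna, hnb, hab⟩ := convex_onesided hDconc.neg hx
  -- D has one-sided derivatives -a and -b
  have hDa : HasDerivWithinAt D (-a) (Set.Iio x) x := by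
    have := hna.neg; simpa using this
  have hDb : HasDerivWithinAt D (-b) (Set.Ioi x) x := by
    have := hnb.neg; simpa using this
  -- u y = y - D y
  have hua : HasDerivWithinAt (fun y => y - D y) (1 - (-a)) (Set.Iio x) x :=
    (hasDerivWithinAt_id x _).sub hDa
  have hub : HasDerivWithinAt (fun y => y - D y) (1 - (-b)) (Set.Ioi x) x :=
    (hasDerivWithinAt_id x _).sub hDb
  have hgfun : g = fun y => φ (y - D y) := funext hg
  -- one-sided derivatives of g via chain rule
  have hga : HasDerivWithinAt g (deriv φ s * (1 - (-a))) (Set.Iio x) x := by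
    rw [hgfun]
    exact HasDerivAt.comp_hasDerivWithinAt x hφs hua
  have hgb : HasDerivWithinAt g (deriv φ s * (1 - (-b))) (Set.Ioi x) x := by
    rw [hgfun]
    exact HasDerivAt.comp_hasDerivWithinAt x hφs hub
  -- convexity of g forces left deriv ≤ right deriv
  have hle : deriv φ s * (1 - (-a)) ≤ deriv φ s * (1 - (-b)) :=
    convex_left_le_right hgconv hx hga hgb
  have hba : b ≤ a := by nlinarith
  have hab' : a = b := le_antisymm hab hba
  -- D differentiable at x
  have hD : HasDerivAt D (-a) x := by
    have hu : HasDerivWithinAt D (-a) (Set.Iio x ∪ Set.Ioi x) x :=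
      hDa.union (hab' ▸ hDb)
    rw [Set.Iio_union_Ioi, compl_eq_univ_diff, hasDerivWithinAt_diff_singleton,
      hasDerivWithinAt_univ] at hu
    exact hu
  have hDdiff : DifferentiableAt ℝ D x := hD.differentiableAt
  refine ⟨hDdiff, ?_⟩
  have hDderiv : deriv D x = -a := hD.deriv
  have hu : HasDerivAt (fun y => y - D y) (1 - deriv D x) x := by
    rw [hDderiv]; exact (hasDerivAt_id x).sub hD
  rw [hgfun]
  exact HasDerivAt.comp x hφs hu
end

section
/- Fix r > 0, σ > 0, K > 0. Set α = -2r/σ² and c = 2rK/(2r + σ²), and define f : (0,∞) → ℝ by f(x) = (K - c)·(x/c)^α. Then: (i) 0 < c < K; (ii) f solves the ODE (σ²x²/2)·f''(x) + r·x·f'(x) - r·f(x) = 0 for all x > 0; (iii) f(c) = K - c; and (iv) f'(c) = -1 (smooth fit). -/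
/-!
`f` is a power function, and a power `x ↦ (x / c) ^ p` solves the Euler equation
`b x² f'' + d x f' + e f = 0` exactly when `p` is a root of the indicial polynomial
`b p (p - 1) + d p + e`. For `b = σ²/2`, `d = r`, `e = -r` this polynomial is
`(p - 1) (σ² p / 2 + r)`, whose root `p = -2r/σ²` is `α`. The choice of `c` is what makes
`f'(c) = α (K - c) / c` equal to `-1`.
-/

open Filter Topology

section PowerFunction

variable (a c p : ℝ) {x : ℝ}

theorem hasDerivAt_const_mul_div_rpow (hc : c ≠ 0) (hx : x ≠ 0) :
    HasDerivAt (fun y => a * (y / c) ^ p) (a * p / c * (x / c) ^ (p - 1)) x := by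
  have h := (((hasDerivAt_id x).div_const c).rpow_const (p := p)
    (Or.inl (div_ne_zero hx hc))).const_mul a
  exact h.congr_deriv (by simp only [id]; ring)

theorem deriv_const_mul_div_rpow (hc : c ≠ 0) (hx : x ≠ 0) :
    deriv (fun y => a * (y / c) ^ p) x = a * p / c * (x / c) ^ (p - 1) :=
  (hasDerivAt_const_mul_div_rpow a c p hc hx).deriv

theorem deriv_deriv_const_mul_div_rpow (hc : c ≠ 0) (hx : x ≠ 0) :
    deriv (deriv fun y => a * (y / c) ^ p) x = a * p / c * (p - 1) / c * (x / c) ^ (p - 2) := by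
  have hev : deriv (fun y => a * (y / c) ^ p) =ᶠ[𝓝 x] fun y => a * p / c * (y / c) ^ (p - 1) := by
    filter_upwards [isOpen_ne.mem_nhds hx] with y hy
    exact deriv_const_mul_div_rpow a c p hc hy
  rw [hev.deriv_eq, deriv_const_mul_div_rpow _ c _ hc hx, sub_sub]
  norm_num

theorem euler_residual_const_mul_div_rpow (b d e : ℝ) (hc : 0 < c) (hx : 0 < x) :
    b * x ^ 2 * deriv (deriv fun y => a * (y / c) ^ p) x
        + d * x * deriv (fun y => a * (y / c) ^ p) x + e * (a * (x / c) ^ p) =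
      (b * p * (p - 1) + d * p + e) * (a * (x / c) ^ p) := by
  have hxc : 0 < x / c := div_pos hx hc
  have hp1 : (x / c) ^ (p - 1) = (x / c) ^ p / (x / c) := by
    rw [Real.rpow_sub hxc, Real.rpow_one]
  have hp2 : (x / c) ^ (p - 2) = (x / c) ^ p / (x / c) ^ 2 := by
    rw [Real.rpow_sub hxc, Real.rpow_two]
  rw [deriv_deriv_const_mul_div_rpow a c p hc.ne' hx.ne',
    deriv_const_mul_div_rpow a c p hc.ne' hx.ne', hp1, hp2]
  field_simp

end PowerFunction

theorem stmt_15 (r σ K : ℝ) (hr : 0 < r) (hσ : 0 < σ) (hK : 0 < K)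
    (α c : ℝ) (hα : α = -(2 * r) / σ ^ 2) (hc : c = 2 * r * K / (2 * r + σ ^ 2))
    (f : ℝ → ℝ) (hf : ∀ x, f x = (K - c) * (x / c) ^ α) :
    (0 < c ∧ c < K) ∧
    (∀ x > (0:ℝ),
      σ ^ 2 * x ^ 2 / 2 * deriv (deriv f) x + r * x * deriv f x - r * f x = 0) ∧
    f c = K - c ∧
    deriv f c = -1 := by
  have hden : 0 < 2 * r + σ ^ 2 := by positivity
  have hc0 : 0 < c := by rw [hc]; positivity
  have hcK : c < K := by rw [hc, div_lt_iff₀ hden]; nlinarith [pow_pos hσ 2]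
  have hindicial : σ ^ 2 / 2 * α * (α - 1) + r * α + -r = 0 := by
    rw [hα]; field_simp; ring
  obtain rfl : f = fun y => (K - c) * (y / c) ^ α := funext hf
  refine ⟨⟨hc0, hcK⟩, fun x hx => ?_, ?_, ?_⟩
  · have h := euler_residual_const_mul_div_rpow (K - c) c α (σ ^ 2 / 2) r (-r) hc0 hx
    rw [hindicial, zero_mul] at h
    linear_combination h
  · simp [div_self hc0.ne']
  · rw [deriv_const_mul_div_rpow _ c _ hc0.ne' hc0.ne', div_self hc0.ne', Real.one_rpow, hc, hα]
    field_simp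
    ring
end
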